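/- arXiv:0904.3470 — 9 statements merged into one kernel-verified Lean document; each statement's English description precedes it below -/
import Mathlib

section
/- If S is a subset of the integers ℤ with positive uniform asymptotic upper density (i.e., there exists δ > 0 such that for every n there is an interval of length at least n in which S has density at least δ), then the difference set S - S is syndetic, i.e., there exists a finite set F ⊆ ℤ such that ℤ = (S - S) + F. -/
open scoped Cardinal

/-- If `S ⊆ ℤ` has positive uniform asymptotic upper density, then `S - S` is syndetic:
finitely many translates of `S - S` cover `ℤ`. -/
theorem stmt_0 (S : Set ℤ)
    (hpos : ∃ δ : ℝ, 0 < δ ∧ ∀ n : ℕ, ∃ (a : ℤ) (L : ℕ), n ≤ L ∧ 0 < L ∧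
      δ ≤ (Nat.card ↥(S ∩ Set.Ico a (a + L)) : ℝ) / L) :
    ∃ F : Finset ℤ, ∀ z : ℤ, ∃ f ∈ F, ∃ s ∈ S, ∃ t ∈ S, z = (s - t) + f := by
  classical
  obtain ⟨δ, hδ, h⟩ := hpos
  by_contra hcon
  push_neg at hcon
  -- difference set
  set D : Set ℤ := {z | ∃ s ∈ S, ∃ t ∈ S, z = s - t} with hDdef
  have hcon' : ∀ F : Finset ℤ, ∃ z : ℤ, ∀ f ∈ F, z - f ∉ D := by
    intro F
    obtain ⟨z, hz⟩ := hcon F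
    exact ⟨z, fun f hf ⟨s, hs, t, ht, he⟩ => hz f hf s hs t ht (by linarith [he])⟩
  choose g hg using hcon'
  -- basic card fact
  have hcard : ∀ (a : ℤ) (L : ℕ),
      (Nat.card ↥(S ∩ Set.Ico a (a + L)) : ℝ) =
        ((Finset.Ico a (a + (L:ℤ))).filter (· ∈ S)).card := by
    intro a L
    congr 1
    rw [Nat.card_coe_set_eq]
    have : S ∩ Set.Ico a (a + (L:ℤ)) =
        ↑((Finset.Ico a (a + (L:ℤ))).filter (· ∈ S)) := by
      ext x
      simp only [Set.mem_inter_iff, Set.mem_Ico, Finset.coe_filter, Finset.mem_Ico,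
        Set.mem_setOf_eq]
      tauto
    rw [this, Set.ncard_coe_finset]
  -- S nonempty
  have hSne : S.Nonempty := by
    obtain ⟨a, L, hL1, hL0, hd⟩ := h 1
    rcases (S ∩ Set.Ico a (a + (L:ℤ))).eq_empty_or_nonempty with he | hne
    · rw [hcard] at hd
      have : (Finset.Ico a (a + (L:ℤ))).filter (· ∈ S) = ∅ := by
        rw [Finset.filter_eq_empty_iff]
        intro x hx hxS
        have hmem : x ∈ S ∩ Set.Ico a (a + (L:ℤ)) := ⟨hxS, by simpa [Set.mem_Ico] using hx⟩
        rw [he] at hmem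
        exact hmem
      rw [this] at hd
      simp at hd
      linarith
    · exact ⟨hne.choose, hne.choose_spec.1⟩
  obtain ⟨s₀, hs₀⟩ := hSne
  have h0D : (0:ℤ) ∈ D := ⟨s₀, hs₀, s₀, hs₀, by ring⟩
  have hDsymm : ∀ z ∈ D, -z ∈ D := by
    rintro z ⟨s, hs, t, ht, rfl⟩
    exact ⟨t, ht, s, hs, by ring⟩
  -- build a growing family with pairwise differences outside D
  set T : ℕ → Finset ℤ := fun n => Nat.rec ({0} : Finset ℤ) (fun _ Tn => insert (g Tn) Tn) n
    with hTdef
  have hTstep : ∀ n, T (n + 1) = insert (g (T n)) (T n) := fun n => rfl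
  have hgnotmem : ∀ F : Finset ℤ, g F ∉ F := by
    intro F hmem
    exact hg F (g F) hmem (by simpa using h0D)
  have hTcard : ∀ n, (T n).card = n + 1 := by
    intro n
    induction n with
    | zero => rfl
    | succ n ih =>
      rw [hTstep, Finset.card_insert_of_notMem (hgnotmem _), ih]
  have hTpair : ∀ n, ∀ x ∈ T n, ∀ y ∈ T n, x ≠ y → x - y ∉ D := by
    intro n
    induction n with
    | zero =>
      intro x hx y hy hxy
      simp only [hTdef] at hx hy
      simp at hx hy
      exact absurd (hx.trans hy.symm) hxy
    | succ n ih =>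
      intro x hx y hy hxy
      rw [hTstep, Finset.mem_insert] at hx hy
      rcases hx with rfl | hx <;> rcases hy with rfl | hy
      · exact absurd rfl hxy
      · exact hg (T n) y hy
      · intro hd
        exact hg (T n) x hx (by simpa using hDsymm _ hd)
      · exact ih x hx y hy hxy
  -- choose the family size
  set N : ℕ := ⌈δ⁻¹⌉₊ with hNdef
  set F : Finset ℤ := T N with hFdef
  have hFne : F.Nonempty := Finset.card_pos.mp (by rw [hFdef, hTcard]; omega)
  have hFcard : (N : ℝ) + 1 ≤ (F.card : ℝ) := by
    rw [hFdef, hTcard]; push_cast; linarith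
  set C : ℕ := (F.max' hFne - F.min' hFne).toNat with hCdef
  have hminmax : F.min' hFne ≤ F.max' hFne := Finset.min'_le _ _ (F.max'_mem hFne)
  have hCeq : (C : ℤ) = F.max' hFne - F.min' hFne := Int.toNat_of_nonneg (by omega)
  -- choose a long interval
  obtain ⟨a, L, hLn, hL0, hd⟩ := h (⌈(C:ℝ)/δ⌉₊ + 1)
  rw [hcard] at hd
  set A : Finset ℤ := (Finset.Ico a (a + (L:ℤ))).filter (· ∈ S) with hAdef
  -- translated copies are disjoint
  have hdisj : ∀ f ∈ F, ∀ f' ∈ F, f ≠ f' →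
      Disjoint (A.image (· + f)) (A.image (· + f')) := by
    intro f hf f' hf' hne
    rw [Finset.disjoint_left]
    rintro x hx hx'
    simp only [Finset.mem_image, hAdef, Finset.mem_filter] at hx hx'
    obtain ⟨s, ⟨_, hsS⟩, rfl⟩ := hx
    obtain ⟨t, ⟨_, htS⟩, he⟩ := hx'
    exact hTpair N f' hf' f hf (Ne.symm hne) ⟨s, hsS, t, htS, by linarith⟩
  have hsub : F.biUnion (fun f => A.image (· + f)) ⊆
      Finset.Ico (a + F.min' hFne) (a + L + F.max' hFne) := by
    intro x hx
    rw [Finset.mem_biUnion] at hx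
    obtain ⟨f, hf, hx⟩ := hx
    simp only [Finset.mem_image, hAdef, Finset.mem_filter, Finset.mem_Ico] at hx ⊢
    obtain ⟨s, ⟨⟨h1, h2⟩, _⟩, rfl⟩ := hx
    constructor
    · have := F.min'_le f hf; omega
    · have := F.le_max' f hf; omega
  have hcount : F.card * A.card ≤ L + C := by
    have h1 : (F.biUnion (fun f => A.image (· + f))).card = F.card * A.card := by
      rw [Finset.card_biUnion hdisj]
      rw [Finset.sum_congr rfl (fun f _ => Finset.card_image_of_injective A
        (add_left_injective f))]
      simp [mul_comm]
    have h2 := Finset.card_le_card hsub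
    rw [h1] at h2
    have h3 : (Finset.Ico (a + F.min' hFne) (a + L + F.max' hFne)).card
        = L + C := by
      rw [Int.card_Ico]
      omega
    omega
  -- final real arithmetic
  have hL0' : (0:ℝ) < (L:ℝ) := by exact_mod_cast hL0
  have hm : δ * L ≤ (A.card : ℝ) := by
    exact (le_div_iff₀ hL0').mp hd
  have hk : δ⁻¹ + 1 ≤ (F.card : ℝ) := by
    have := Nat.le_ceil (δ⁻¹)
    linarith [hFcard]
  have hcountR : (F.card : ℝ) * (A.card : ℝ) ≤ L + C := by
    exact_mod_cast hcount
  have hLbig : (C:ℝ)/δ + 1 ≤ (L:ℝ) := by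
    have h1 := Nat.le_ceil ((C:ℝ)/δ)
    have h2 : ((⌈(C:ℝ)/δ⌉₊ + 1 : ℕ) : ℝ) ≤ (L:ℝ) := by exact_mod_cast hLn
    push_cast at h2
    linarith
  have key : (δ⁻¹ + 1) * (δ * L) ≤ (L:ℝ) + C := by
    calc (δ⁻¹ + 1) * (δ * L) ≤ (F.card : ℝ) * (δ * L) := by
          apply mul_le_mul_of_nonneg_right hk
          positivity
      _ ≤ (F.card : ℝ) * (A.card : ℝ) := by
          apply mul_le_mul_of_nonneg_left hm
          positivity
      _ ≤ L + C := hcountR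
  have hexp : (δ⁻¹ + 1) * (δ * L) = (L:ℝ) + δ * L := by
    field_simp
  rw [hexp] at key
  have : δ * L ≤ C := by linarith
  have : (C:ℝ)/δ < (L:ℝ) := by linarith
  rw [div_lt_iff₀ hδ] at this
  linarith [mul_comm δ (L:ℝ)]
end

section
/- Kuratowski's Free Set Theorem: for an infinite cardinal λ and a positive integer n, every function F from [κ]^n to [κ]^{<λ} has a free set of size n+1 if and only if κ ≥ λ^{+n} (the n-th cardinal successor of λ). -/
open scoped Cardinal

open Cardinal Order

/-- Transfer the existence of a "bad" set map along an equivalence. -/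
private lemma kur_transfer {α β : Type} [DecidableEq α] [DecidableEq β] (e : α ≃ β)
    (lam : Cardinal) (n : ℕ)
    (h : ∃ F : Finset β → Set β, (∀ s, s.card = n → #(F s) < lam) ∧
      ∀ H : Finset β, H.card = n + 1 → ∃ a ∈ H, ∃ s ⊆ H.erase a, s.card = n ∧ a ∈ F s) :
    ∃ F : Finset α → Set α, (∀ s, s.card = n → #(F s) < lam) ∧
      ∀ H : Finset α, H.card = n + 1 → ∃ a ∈ H, ∃ s ⊆ H.erase a, s.card = n ∧ a ∈ F s := by
  obtain ⟨F, hs, hf⟩ := h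
  refine ⟨fun s => e.symm '' F (s.map e.toEmbedding), ?_, ?_⟩
  · intro s hcard
    exact Cardinal.mk_image_le.trans_lt (hs _ (by simp [hcard]))
  · intro H hcard
    obtain ⟨a, ha, s, hsub, hc, hmem⟩ := hf (H.map e.toEmbedding) (by simp [hcard])
    refine ⟨e.symm a, ?_, s.map e.symm.toEmbedding, ?_, by simp [hc], ?_⟩
    · obtain ⟨a', ha', rfl⟩ := Finset.mem_map.mp ha
      simpa using ha'
    · intro c hc'
      obtain ⟨c', hcs, rfl⟩ := Finset.mem_map.mp hc'
      have h2 := hsub hcs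
      rw [Finset.mem_erase] at h2
      obtain ⟨hne, hmem'⟩ := h2
      obtain ⟨c'', hc'', rfl⟩ := Finset.mem_map.mp hmem'
      rw [Finset.mem_erase]
      constructor
      · simp only [Equiv.coe_toEmbedding, Function.Embedding.coeFn_mk,
          Equiv.symm_apply_apply]
        intro hEq
        exact hne (by rw [hEq]; simp)
      · simpa using hc''
    · have h3 : (s.map e.symm.toEmbedding).map e.toEmbedding = s := by
        rw [Finset.map_map]
        ext c
        simp
      show e.symm a ∈ e.symm '' F ((s.map e.symm.toEmbedding).map e.toEmbedding)
      rw [h3]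
      exact ⟨a, hmem, rfl⟩

/-- Negative direction: if `#α ≤ λ^{+m}` then there is a set map on `(m+1)`-sets with
no free set of size `m+2`. -/
private lemma kur_neg (lam : Cardinal) (hlam : ℵ₀ ≤ lam) :
    ∀ m : ℕ, ∀ (α : Type) [DecidableEq α], #α ≤ (Order.succ)^[m] lam →
      ∃ F : Finset α → Set α, (∀ s, s.card = m + 1 → #(F s) < lam) ∧
        ∀ H : Finset α, H.card = m + 2 → ∃ a ∈ H, ∃ s ⊆ H.erase a, s.card = m + 1 ∧ a ∈ F s := by
  intro m
  induction m with
  | zero =>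
    intro α _ hle
    have hle' : #α ≤ lam := by simpa using hle
    have hmk : #((#α).ord.ToType) = #α := by rw [Cardinal.mk_toType, Cardinal.card_ord]
    obtain ⟨e⟩ : Nonempty (α ≃ (#α).ord.ToType) := by rw [← Cardinal.eq, hmk]
    haveI : DecidableEq ((#α).ord.ToType) := Classical.decEq _
    apply kur_transfer e
    refine ⟨fun s => {y | ∃ a ∈ s, y < a}, ?_, ?_⟩
    · intro s hcard
      obtain ⟨a, rfl⟩ := Finset.card_eq_one.mp hcard
      have hset : {y | ∃ b ∈ ({a} : Finset _), y < b} = Set.Iio a := by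
        ext y; simp
      show #({y | ∃ b ∈ ({a} : Finset _), y < b} : Set _) < lam
      rw [hset]
      exact (Cardinal.mk_Iio_ord_toType a).trans_le hle'
    · intro H hcard
      obtain ⟨a, b, hab, rfl⟩ := Finset.card_eq_two.mp hcard
      rcases hab.lt_or_gt with h | h
      · refine ⟨a, by simp, {b}, ?_, by simp, ⟨b, by simp, h⟩⟩
        intro c hc
        simp only [Finset.mem_singleton] at hc
        subst hc
        simp [Finset.mem_erase, hab.symm]
      · refine ⟨b, by simp, {a}, ?_, by simp, ⟨a, by simp, h⟩⟩
        intro c hc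
        simp only [Finset.mem_singleton] at hc
        subst hc
        simp [Finset.mem_erase, hab]
  | succ m ih =>
    intro α _ hle
    classical
    rw [Function.iterate_succ_apply'] at hle
    have hmk : #((#α).ord.ToType) = #α := by rw [Cardinal.mk_toType, Cardinal.card_ord]
    obtain ⟨e⟩ : Nonempty (α ≃ (#α).ord.ToType) := by rw [← Cardinal.eq, hmk]
    apply kur_transfer e
    set β := (#α).ord.ToType with hβ
    have hseg : ∀ x : β, #(Set.Iio x) ≤ (Order.succ)^[m] lam := by
      intro x
      have h1 : #(Set.Iio x) < #α := Cardinal.mk_Iio_ord_toType x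
      exact Order.lt_succ_iff.mp (h1.trans_le hle)
    choose G hG1 hG2 using fun x : β => ih (Set.Iio x) (hseg x)
    refine ⟨fun s => if h : s.Nonempty then
        Subtype.val '' (G (s.max' h)
          ((s.erase (s.max' h)).subtype (· ∈ Set.Iio (s.max' h)))) else ∅, ?_, ?_⟩
    · intro s hcard
      have h : s.Nonempty := Finset.card_pos.mp (by omega)
      have hmem' : ∀ y ∈ s.erase (s.max' h), y ∈ Set.Iio (s.max' h) := fun y hy =>
        lt_of_le_of_ne (s.le_max' y (Finset.mem_of_mem_erase hy)) (Finset.mem_erase.mp hy).1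
      dsimp only
      rw [dif_pos h]
      refine Cardinal.mk_image_le.trans_lt (hG1 (s.max' h) _ ?_)
      rw [Finset.card_subtype, Finset.filter_true_of_mem hmem',
        Finset.card_erase_of_mem (s.max'_mem h), hcard]
      omega
    · intro H hcard
      have h : H.Nonempty := Finset.card_pos.mp (by omega)
      set a := H.max' h with ha
      have hmemIio : ∀ y ∈ H.erase a, y ∈ Set.Iio a := fun y hy =>
        lt_of_le_of_ne (H.le_max' y (Finset.mem_of_mem_erase hy))
          (Finset.mem_erase.mp hy).1
      set H' := (H.erase a).subtype (· ∈ Set.Iio a) with hH'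
      have hH'card : H'.card = m + 2 := by
        rw [hH', Finset.card_subtype, Finset.filter_true_of_mem hmemIio,
          Finset.card_erase_of_mem (H.max'_mem h), hcard]
        omega
      obtain ⟨b₀, hb₀, t, htsub, htcard, hbG⟩ := hG2 a H' hH'card
      have hbH : (b₀ : β) ∈ H.erase a := Finset.mem_subtype.mp hb₀
      have hanotin : a ∉ t.map (Function.Embedding.subtype (· ∈ Set.Iio a)) := by
        intro hmem
        obtain ⟨c₀, _, hc₀⟩ := Finset.mem_map.mp hmem
        have hca : (c₀ : β) = a := hc₀
        have : (c₀ : β) < a := c₀.2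
        rw [hca] at this
        exact lt_irrefl _ this
      refine ⟨(b₀ : β), Finset.mem_of_mem_erase hbH,
        insert a (t.map (Function.Embedding.subtype (· ∈ Set.Iio a))), ?_, ?_, ?_⟩
      · intro c hc
        rcases Finset.mem_insert.mp hc with rfl | hc'
        · exact Finset.mem_erase.mpr ⟨(Finset.mem_erase.mp hbH).1.symm, H.max'_mem h⟩
        · obtain ⟨c₀, hc₀t, rfl⟩ := Finset.mem_map.mp hc'
          have hc₀e := Finset.mem_erase.mp (htsub hc₀t)
          refine Finset.mem_erase.mpr ⟨?_, Finset.mem_of_mem_erase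
            (Finset.mem_subtype.mp hc₀e.2)⟩
          exact fun hEq => hc₀e.1 (Subtype.coe_injective hEq)
      · rw [Finset.card_insert_of_notMem hanotin, Finset.card_map, htcard]
      · have hs : (insert a (t.map (Function.Embedding.subtype (· ∈ Set.Iio a)))).Nonempty :=
          Finset.insert_nonempty _ _
        dsimp only
        rw [dif_pos hs]
        have hmax : (insert a (t.map (Function.Embedding.subtype (· ∈ Set.Iio a)))).max' hs
            = a := by
          refine le_antisymm (Finset.max'_le _ _ _ fun c hc => ?_)
            (Finset.le_max' _ _ (Finset.mem_insert_self _ _))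
          rcases Finset.mem_insert.mp hc with rfl | hc'
          · exact le_refl _
          · obtain ⟨c₀, _, rfl⟩ := Finset.mem_map.mp hc'
            exact le_of_lt c₀.2
        rw [hmax, Finset.erase_insert hanotin]
        have hround : ((t.map (Function.Embedding.subtype (· ∈ Set.Iio a))).subtype
            (· ∈ Set.Iio a)) = t := by
          ext y
          simp only [Finset.mem_subtype, Finset.mem_map,
            Function.Embedding.coe_subtype]
          constructor
          · rintro ⟨z, hz, hzy⟩
            rwa [show z = y from Subtype.coe_injective hzy] at hz
          · exact fun hy => ⟨y, hy, rfl⟩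
        rw [hround]
        exact ⟨b₀, hbG, rfl⟩

/-- Positive direction: if `λ^{+n} ≤ #α` then every set map on `n`-sets has a free set of
size `n+1`. -/
private lemma kur_pos (lam : Cardinal) (hlam : ℵ₀ ≤ lam) :
    ∀ n : ℕ, ∀ (α : Type) [DecidableEq α], (Order.succ)^[n] lam ≤ #α →
      ∀ F : Finset α → Set α, (∀ s : Finset α, s.card = n → #(F s) < lam) →
        ∃ H : Finset α, H.card = n + 1 ∧
          ∀ a ∈ H, ∀ s ⊆ H.erase a, s.card = n → a ∉ F s := by
  intro n
  induction n with
  | zero =>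
    intro α _ hle F hF
    have h0 : #(F ∅) < #α := (hF ∅ rfl).trans_le (by simpa using hle)
    have hex : ∃ x, x ∉ F ∅ := by
      by_contra hcon
      push_neg at hcon
      rw [Set.eq_univ_of_forall hcon, Cardinal.mk_univ] at h0
      exact lt_irrefl _ h0
    obtain ⟨x, hx⟩ := hex
    refine ⟨{x}, rfl, ?_⟩
    intro a ha s hsub hcard
    rw [Finset.mem_singleton] at ha
    subst ha
    rw [Finset.card_eq_zero.mp hcard]
    exact hx
  | succ n ihn =>
    intro α _ hle F hF
    classical
    set μ := (Order.succ)^[n] lam with hμ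
    have hμ0 : ℵ₀ ≤ μ := hlam.trans (Order.le_succ_iterate n lam)
    have hlamμ : lam ≤ μ := Order.le_succ_iterate n lam
    rw [Function.iterate_succ_apply'] at hle
    have hμα : μ ≤ #α := (Order.lt_succ μ).le.trans hle
    obtain ⟨S, hS⟩ := Cardinal.le_mk_iff_exists_set.mp hμα
    haveI : Infinite S := Cardinal.aleph0_le_mk_iff.mp (by rw [hS]; exact hμ0)
    set emb : ↥S ↪ α := Function.Embedding.subtype (· ∈ S) with hemb
    have hembS : ∀ (t : Finset ↥S), ∀ c ∈ t.map emb, c ∈ S := by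
      intro t c hc
      obtain ⟨c₀, _, rfl⟩ := Finset.mem_map.mp hc
      exact c₀.2
    set g : Finset ↥S → Set α :=
      fun t => if (t.map emb).card = n + 1 then F (t.map emb) else ∅ with hg
    have hgle : ∀ t, #(g t) ≤ μ := by
      intro t
      by_cases hcase : (t.map emb).card = n + 1
      · rw [hg]; simp only [if_pos hcase]; exact (hF _ hcase).le.trans hlamμ
      · rw [hg]; simp only [if_neg hcase]; simp
    have hB : #(S ∪ ⋃ t : Finset ↥S, g t : Set α) < #α := by
      have h1 : #(⋃ t : Finset ↥S, g t) ≤ #(Finset ↥S) * μ :=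
        (Cardinal.mk_iUnion_le _).trans (mul_le_mul' le_rfl (ciSup_le' hgle))
      have h2 : #(Finset ↥S) = μ := by rw [Cardinal.mk_finset_of_infinite, hS]
      calc #(S ∪ ⋃ t : Finset ↥S, g t : Set α) ≤ #S + #(⋃ t : Finset ↥S, g t) :=
              Cardinal.mk_union_le _ _
        _ ≤ μ + μ * μ := by rw [hS]; exact add_le_add le_rfl (h1.trans_eq (by rw [h2]))
        _ = μ := by rw [Cardinal.mul_eq_self hμ0, Cardinal.add_eq_self hμ0]
        _ < Order.succ μ := Order.lt_succ μ
        _ ≤ #α := hle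
    have hex : ∃ x, x ∉ (S ∪ ⋃ t : Finset ↥S, g t : Set α) := by
      by_contra hcon
      push_neg at hcon
      rw [Set.eq_univ_of_forall hcon, Cardinal.mk_univ] at hB
      exact lt_irrefl _ hB
    obtain ⟨x, hx⟩ := hex
    have hxS : x ∉ S := fun h => hx (Set.mem_union_left _ h)
    have hxF : ∀ t : Finset ↥S, (t.map emb).card = n + 1 → x ∉ F (t.map emb) := by
      intro t ht hmem
      exact hx (Set.mem_union_right _ (Set.mem_iUnion.mpr
        ⟨t, by rw [hg]; simp only [if_pos ht]; exact hmem⟩))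
    have hxmap : ∀ t : Finset ↥S, x ∉ t.map emb := fun t hmem => hxS (hembS t x hmem)
    set G : Finset ↥S → Set ↥S :=
      fun t => {y : ↥S | (y : α) ∈ F (insert x (t.map emb))} with hG
    have hGsmall : ∀ t : Finset ↥S, t.card = n → #(G t) < lam := by
      intro t ht
      have hcardins : (insert x (t.map emb)).card = n + 1 := by
        rw [Finset.card_insert_of_notMem (hxmap t), Finset.card_map, ht]
      refine lt_of_le_of_lt ?_ (hF _ hcardins)
      exact Cardinal.mk_le_of_injective
        (f := fun y : G t => (⟨(y.1 : α), y.2⟩ : F (insert x (t.map emb))))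
        (fun y z hyz => by
          have h' := congrArg Subtype.val hyz
          exact Subtype.ext (Subtype.ext h'))
    obtain ⟨H₀, hH₀card, hH₀free⟩ := ihn ↥S (by rw [hS]) G hGsmall
    refine ⟨insert x (H₀.map emb), ?_, ?_⟩
    · rw [Finset.card_insert_of_notMem (hxmap H₀), Finset.card_map, hH₀card]
    · intro a ha s hsub hcard
      by_cases hax : a = x
      · subst hax
        have hsub' : s ⊆ H₀.map emb := by
          intro c hc
          have h' := hsub hc
          rwa [Finset.erase_insert (hxmap H₀)] at h'
        have hmemS : ∀ c ∈ s, c ∈ S := fun c hc => hembS H₀ c (hsub' hc)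
        set t := s.subtype (· ∈ S) with ht
        have htm : t.map emb = s := Finset.subtype_map_of_mem hmemS
        have hc' : (t.map emb).card = n + 1 := by rw [htm, hcard]
        have h'' := hxF t hc'
        rwa [htm] at h''
      · have haH : a ∈ H₀.map emb := by
          rcases Finset.mem_insert.mp ha with h' | h'
          · exact absurd h' hax
          · exact h'
        obtain ⟨a₀, ha₀, rfl⟩ := Finset.mem_map.mp haH
        by_cases hxs : x ∈ s
        · have hs' : ∀ c ∈ s.erase x, c ∈ H₀.map emb ∧ c ≠ emb a₀ := by
            intro c hc
            obtain ⟨hcx, hcs⟩ := Finset.mem_erase.mp hc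
            have hce := Finset.mem_erase.mp (hsub hcs)
            rcases Finset.mem_insert.mp hce.2 with rfl | h'
            · exact absurd rfl hcx
            · exact ⟨h', hce.1⟩
          have hmemS : ∀ c ∈ s.erase x, c ∈ S := fun c hc => hembS H₀ c (hs' c hc).1
          set t := (s.erase x).subtype (· ∈ S) with ht
          have htm : t.map emb = s.erase x := Finset.subtype_map_of_mem hmemS
          have htcard : t.card = n := by
            have h1 : (t.map emb).card = t.card := Finset.card_map _
            rw [htm, Finset.card_erase_of_mem hxs, hcard] at h1
            omega
          have htsub : t ⊆ H₀.erase a₀ := by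
            intro c₀ hc₀
            have hcmem : (c₀ : α) ∈ s.erase x := Finset.mem_subtype.mp hc₀
            obtain ⟨hmem0, hne0⟩ := hs' _ hcmem
            refine Finset.mem_erase.mpr ⟨fun hEq => hne0 (by rw [hEq]; rfl), ?_⟩
            obtain ⟨d₀, hd₀, hd⟩ := Finset.mem_map.mp hmem0
            rwa [show d₀ = c₀ from Subtype.coe_injective hd] at hd₀
          have hnfree := hH₀free a₀ ha₀ t htsub htcard
          intro hmem
          apply hnfree
          show (a₀ : α) ∈ F (insert x (t.map emb))
          rw [htm, Finset.insert_erase hxs]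
          exact hmem
        · exfalso
          have hsub2 : s ⊆ (H₀.map emb).erase (emb a₀) := by
            intro c hc
            have hce := Finset.mem_erase.mp (hsub hc)
            rcases Finset.mem_insert.mp hce.2 with rfl | h'
            · exact absurd hc hxs
            · exact Finset.mem_erase.mpr ⟨hce.1, h'⟩
          have hle2 := Finset.card_le_card hsub2
          rw [hcard, Finset.card_erase_of_mem haH, Finset.card_map, hH₀card] at hle2
          omega

/-- Kuratowski's Free Set Theorem: for infinite `λ` and `n > 0`, every set map
`F : [κ]^n → [κ]^{<λ}` has a free set of size `n+1` iff `κ ≥ λ^{+n}`. -/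
theorem stmt_2 (lam kappa : Cardinal) (hlam : Cardinal.aleph0 ≤ lam) (n : ℕ) (hn : 0 < n) :
    (∀ (α : Type) [DecidableEq α] (_ : #α = kappa) (F : Finset α → Set α),
        (∀ s : Finset α, s.card = n → #(F s) < lam) →
        ∃ H : Finset α, H.card = n + 1 ∧
          ∀ a ∈ H, ∀ s ⊆ H.erase a, s.card = n → a ∉ F s) ↔
    (Order.succ)^[n] lam ≤ kappa := by
  constructor
  · intro hprop
    by_contra hlt
    push_neg at hlt
    obtain ⟨m, rfl⟩ : ∃ m, n = m + 1 := ⟨n - 1, by omega⟩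
    have hk : kappa ≤ (Order.succ)^[m] lam := by
      rw [Function.iterate_succ_apply'] at hlt
      exact (Order.lt_succ_iff).mp hlt
    haveI : DecidableEq kappa.out := Classical.decEq _
    obtain ⟨F, hs, hf⟩ := kur_neg lam hlam m kappa.out (by rw [Cardinal.mk_out]; exact hk)
    obtain ⟨H, hH, hfree⟩ := hprop kappa.out (Cardinal.mk_out kappa) F hs
    obtain ⟨a, ha, s, hsub, hc, hmem⟩ := hf H hH
    exact hfree a ha s hsub hc hmem
  · intro hk α _ hα F hF
    exact kur_pos lam hlam n α (by rw [hα]; exact hk) F hF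
end

section
/- Schur's ℓ¹ theorem: in the Banach space ℓ¹ (of absolutely summable real sequences), every weakly convergent sequence converges in norm. -/
open Filter Topology Function

/-!
Gliding hump. If `z k ⇀ 0` but `‖z k‖ ≥ ε` along a subsequence, then, since the coordinates of
`z k` tend to `0`, one can pass to a further subsequence `w j` whose mass sits, up to `ε / 4`,
on consecutive disjoint blocks of indices. The bounded sequence `t` equal to the sign of `w j` on
the `j`-th block defines a functional with `⟪t, w j⟫ ≥ ‖w j‖ - ε / 2 ≥ ε / 2` for all `j`,
contradicting weak convergence.
-/

section Pairing

variable {α : Type*}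

theorem lp_one_hasSum_abs (f : lp (fun _ : α => ℝ) 1) : HasSum (fun i => |f i|) ‖f‖ := by
  simpa using lp.hasSum_norm (p := 1) (by norm_num) f

theorem abs_mul_le_abs_of_abs_le_one {a : ℝ} (ha : |a| ≤ 1) (b : ℝ) : |a * b| ≤ |b| := by
  rw [abs_mul]
  exact mul_le_of_le_one_left (abs_nonneg b) ha

variable (t : α → ℝ) (ht : ∀ i, |t i| ≤ 1)
include ht

theorem summable_mul_lp_one (f : lp (fun _ : α => ℝ) 1) : Summable fun i => t i * f i :=
  (lp_one_hasSum_abs f).summable.of_norm_bounded fun i => abs_mul_le_abs_of_abs_le_one (ht i) _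

noncomputable def l1Pairing : lp (fun _ : α => ℝ) 1 →L[ℝ] ℝ :=
  LinearMap.mkContinuous
    { toFun := fun f => ∑' i, t i * f i
      map_add' := fun f g => by
        simp only [lp.coeFn_add, Pi.add_apply, mul_add]
        exact (summable_mul_lp_one t ht f).tsum_add (summable_mul_lp_one t ht g)
      map_smul' := fun c f => by
        simp only [lp.coeFn_smul, Pi.smul_apply, smul_eq_mul, RingHom.id_apply, mul_left_comm,
          tsum_mul_left] }
    1
    fun f => by
      simpa using tsum_of_norm_bounded (f := fun i => t i * f i) (lp_one_hasSum_abs f)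
        fun i => abs_mul_le_abs_of_abs_le_one (ht i) _

theorem norm_sub_l1Pairing_le (w : lp (fun _ : α => ℝ) 1) (s : Finset α)
    (hs : ∀ i ∈ s, t i * w i = |w i|) :
    ‖w‖ - l1Pairing t ht w ≤ 2 * (‖w‖ - ∑ i ∈ s, |w i|) := by
  classical
  have hlhs : HasSum (fun i => |w i| - t i * w i) (‖w‖ - l1Pairing t ht w) :=
    (lp_one_hasSum_abs w).sub (summable_mul_lp_one t ht w).hasSum
  have hrhs : HasSum (fun i => 2 * |w i| - if i ∈ s then 2 * |w i| else 0)
      (2 * ‖w‖ - ∑ i ∈ s, 2 * |w i|) := by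
    refine ((lp_one_hasSum_abs w).mul_left 2).sub ?_
    simpa only [Finset.sum_ite_mem, Finset.inter_self] using
      hasSum_sum_of_ne_finset_zero (s := s) (f := fun i => if i ∈ s then 2 * |w i| else 0)
        fun i hi => if_neg hi
  refine (hasSum_le (fun i => ?_) hlhs hrhs).trans_eq (by rw [← Finset.mul_sum]; ring)
  split_ifs with hi
  · rw [hs i hi]; linarith
  · linarith [neg_abs_le (t i * w i), abs_mul_le_abs_of_abs_le_one (ht i) (w i)]

end Pairing

theorem exists_abs_le_one_mul_eq_abs {ι α : Type*} (v : ι → α → ℝ) (s : ι → Finset α)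
    (hs : Pairwise (Disjoint on s)) :
    ∃ t : α → ℝ, (∀ i, |t i| ≤ 1) ∧ ∀ j, ∀ i ∈ s j, t i * v j i = |v j i| := by
  classical
  refine ⟨fun i => if h : ∃ j, i ∈ s j then SignType.sign (v h.choose i) else 0,
    fun i => ?_, fun j i hi => ?_⟩
  · dsimp only
    split_ifs
    · rcases SignType.sign (v _ i) with _ | _ | _ <;> simp
    · simp
  · have h : ∃ j, i ∈ s j := ⟨j, hi⟩
    have hj : h.choose = j := hs.eq (Finset.not_disjoint_iff.2 ⟨i, h.choose_spec, hi⟩)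
    simp only [dif_pos h, hj, sign_mul_self]

local notation "ℓ¹" => lp (fun _ : ℕ => ℝ) 1

section GlidingHump

variable (w : ℕ → ℓ¹) (hw : ∀ i, Tendsto (fun k => w k i) atTop (𝓝 0)) {δ : ℝ} (hδ : 0 < δ)
include hw hδ

theorem exists_gt_almost_supported_Ico (m a : ℕ) :
    ∃ k b, m < k ∧ a ≤ b ∧ ‖w k‖ - ∑ i ∈ Finset.Ico a b, |w k i| < δ := by
  have hhead : Tendsto (fun k => ∑ i ∈ Finset.range a, |w k i|) atTop (𝓝 0) := by
    simpa using tendsto_finsetSum _ fun i _ => (hw i).abs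
  obtain ⟨k, hmk, hk⟩ :=
    ((eventually_gt_atTop m).and (hhead.eventually_lt_const (half_pos hδ))).exists
  have htail : Tendsto (fun b => ‖w k‖ - ∑ i ∈ Finset.range b, |w k i|) atTop (𝓝 0) := by
    simpa only [sub_self] using
      tendsto_const_nhds.sub (lp_one_hasSum_abs (w k)).tendsto_sum_nat (a := ‖w k‖)
  obtain ⟨b, hab, hb⟩ :=
    ((eventually_ge_atTop a).and (htail.eventually_lt_const (half_pos hδ))).exists
  refine ⟨k, b, hmk, hab, ?_⟩
  rw [← Finset.sum_range_add_sum_Ico _ hab] at hb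
  linarith

theorem exists_subseq_almost_supported_on_blocks :
    ∃ k n : ℕ → ℕ, StrictMono k ∧ Monotone n ∧
      ∀ j, ‖w (k j)‖ - ∑ i ∈ Finset.Ico (n j) (n (j + 1)), |w (k j) i| < δ := by
  choose K B hK hB hKB using exists_gt_almost_supported_Ico w hw hδ
  set p : ℕ → ℕ × ℕ := fun j => (fun q : ℕ × ℕ => (K q.1 q.2, B q.1 q.2))^[j] (0, 0)
  have hp : ∀ j, p (j + 1) = (K (p j).1 (p j).2, B (p j).1 (p j).2) := fun j =>
    iterate_succ_apply' _ j _
  refine ⟨fun j => (p (j + 1)).1, fun j => (p j).2, strictMono_nat_of_lt_succ fun j => ?_,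
    monotone_nat_of_le_succ fun j => ?_, fun j => ?_⟩
  · rw [hp (j + 1)]; exact hK _ _
  · rw [hp j]; exact hB _ _
  · simpa only [hp j] using hKB (p j).1 (p j).2

end GlidingHump

theorem tendsto_norm_zero_of_weakly_tendsto_zero (z : ℕ → ℓ¹)
    (hz : ∀ f : ℓ¹ →L[ℝ] ℝ, Tendsto (fun k => f (z k)) atTop (𝓝 0)) :
    Tendsto (fun k => ‖z k‖) atTop (𝓝 0) := by
  by_contra hnot
  obtain ⟨ε, hε, hfreq⟩ : ∃ ε > 0, ∃ᶠ k in atTop, ε ≤ ‖z k‖ := by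
    simpa [Metric.tendsto_nhds, Filter.not_eventually, frequently_atTop] using hnot
  obtain ⟨φ, hφ, hφε⟩ := extraction_of_frequently_atTop hfreq
  have hcoord : ∀ i, Tendsto (fun k => z (φ k) i) atTop (𝓝 0) := fun i =>
    (hz (lp.evalCLM ℝ _ 1 i)).comp hφ.tendsto_atTop
  obtain ⟨k, n, hk, hn, hblock⟩ :=
    exists_subseq_almost_supported_on_blocks _ hcoord (show 0 < ε / 4 by positivity)
  obtain ⟨t, ht, hsign⟩ := exists_abs_le_one_mul_eq_abs (fun j => z (φ (k j)))
    (fun j => Finset.Ico (n j) (n (j + 1))) fun i j hij => by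
      simpa [← Finset.disjoint_coe] using hn.pairwise_disjoint_on_Ico_succ hij
  have hlower : ∀ j, ε / 2 ≤ l1Pairing t ht (z (φ (k j))) := fun j => by
    linarith [norm_sub_l1Pairing_le t ht _ _ (hsign j), hφε (k j), hblock j]
  obtain ⟨j, hj⟩ := (((hz (l1Pairing t ht)).comp (hφ.comp hk).tendsto_atTop).eventually_lt_const
    (half_pos hε)).exists
  exact (hlower j).not_gt hj

/-- Schur's ℓ¹ theorem: every weakly convergent sequence in `ℓ¹` converges in norm. -/
theorem stmt_4 (x : ℕ → lp (fun _ : ℕ => ℝ) 1) (y : lp (fun _ : ℕ => ℝ) 1)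
    (hw : ∀ f : lp (fun _ : ℕ => ℝ) 1 →L[ℝ] ℝ,
      Tendsto (fun k => f (x k)) atTop (𝓝 (f y))) :
    Tendsto (fun k => ‖x k - y‖) atTop (𝓝 0) :=
  tendsto_norm_zero_of_weakly_tendsto_zero (fun k => x k - y) fun f => by
    simpa using (hw f).sub_const (f y)
end

section
/- The Banach space ℓ¹ is weakly sequentially complete: every sequence in ℓ¹ that is weakly Cauchy (i.e., (f(xₙ)) converges in ℝ for every continuous linear functional f) converges weakly to some element of ℓ¹. -/
/-!
The proof goes through Schur's property of `ℓ¹`: a weakly null sequence is norm null. Given it,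
for a weakly Cauchy sequence `x` the differences `x (n N) - x N` with `n N ≥ N` are weakly null,
hence norm null, so `x` is Cauchy and converges in norm, a fortiori weakly.

Schur's property is a gliding hump argument. If `‖v j‖ ≥ ε` while `v` is weakly null, then the
coordinates of `v j` tend to `0`, so one can pick humps `v (I t)` and blocks `[M t, M (t + 1))`
such that each hump carries all but `ε / 4` of its mass on its own block. The functional pairing
`ℓ¹` with the `±1` sequence equal to the sign pattern of the `t`-th hump on the `t`-th block then
takes values `≥ ε / 2` on all humps.
-/
open Filter Topology
open scoped lp

namespace lp

variable {ι E : Type*} [NormedAddCommGroup E]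

lemma norm_eq_tsum_norm (f : ℓ¹(ι, E)) : ‖f‖ = ∑' i, ‖f i‖ := by
  simpa using norm_eq_tsum_rpow (by norm_num : (0 : ℝ) < (1 : ENNReal).toReal) f

lemma summable_norm (f : ℓ¹(ι, E)) : Summable fun i => ‖f i‖ := by
  simpa using (lp.memℓp f).summable (by norm_num : (0 : ℝ) < (1 : ENNReal).toReal)

noncomputable def weightedTsumCLM (s : ι → ℝ) (hs : ∀ i, |s i| ≤ 1) : ℓ¹(ι, ℝ) →L[ℝ] ℝ :=
  tsumCLM ℝ ι ℝ ∘L mapCLM 1 (fun i => s i • ContinuousLinearMap.id ℝ ℝ) zero_le_one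
    fun i => (norm_smul_le _ _).trans <|
      mul_le_one₀ (hs i) (norm_nonneg _) ContinuousLinearMap.norm_id_le

@[simp]
lemma weightedTsumCLM_apply (s : ι → ℝ) (hs : ∀ i, |s i| ≤ 1) (f : ℓ¹(ι, ℝ)) :
    weightedTsumCLM s hs f = ∑' i, s i * f i := by
  simp [weightedTsumCLM]

end lp

open Finset in
lemma tsum_abs_sub_tsum_mul_le {w s : ℕ → ℝ} (hw : Summable fun n => |w n|)
    (hs : ∀ n, |s n| ≤ 1) {a b : ℕ} (hab : a ≤ b)
    (hsw : ∀ n ∈ Ico a b, s n * w n = |w n|) :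
    ∑' n, |w n| - ∑' n, s n * w n ≤ 2 * (∑ n ∈ range a, |w n| + ∑' n, |w (n + b)|) := by
  set g : ℕ → ℝ := fun n => |w n| - s n * w n
  have habs_mul_le : ∀ n, |s n * w n| ≤ |w n| := fun n => by
    rw [abs_mul]; exact mul_le_of_le_one_left (abs_nonneg _) (hs n)
  have hg_le : ∀ n, g n ≤ 2 * |w n| := fun n => by
    have := neg_abs_le (s n * w n); linarith [habs_mul_le n]
  have hsw_sum : Summable fun n => s n * w n :=
    .of_norm_bounded hw fun n => habs_mul_le n
  have hg_sum : Summable g := hw.sub hsw_sum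
  have hg_Ico : ∑ n ∈ Ico a b, g n = 0 := sum_eq_zero fun n hn => sub_eq_zero.2 (hsw n hn).symm
  calc ∑' n, |w n| - ∑' n, s n * w n
      = ∑ n ∈ range a, g n + ∑' n, g (n + b) := by
        rw [← hw.tsum_sub hsw_sum, ← hg_sum.sum_add_tsum_nat_add b,
          ← sum_range_add_sum_Ico _ hab, hg_Ico, add_zero]
    _ ≤ ∑ n ∈ range a, 2 * |w n| + ∑' n, 2 * |w (n + b)| := by
        gcongr with n _
        · exact hg_le n
        · exact (summable_nat_add_iff b).2 hg_sum
        · exact ((summable_nat_add_iff b).2 hw).mul_left 2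
        · exact hg_le _
    _ = 2 * (∑ n ∈ range a, |w n| + ∑' n, |w (n + b)|) := by
        rw [← mul_sum, tsum_mul_left, mul_add]

lemma StrictMono.findGreatest_apply_le_eq {M : ℕ → ℕ} (hM : StrictMono M) {t n : ℕ}
    (ht : M t ≤ n) (hn : n < M (t + 1)) : Nat.findGreatest (fun k => M k ≤ n) n = t := by
  refine Nat.findGreatest_eq_iff.2 ⟨hM.le_apply.trans ht, fun _ => ht, fun k hk _ hkn => ?_⟩
  exact (hn.trans_le (hM.monotone hk)).not_ge hkn

open Finset in
lemma exists_gliding_hump {v : ℕ → ℕ → ℝ}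
    (hcoord : ∀ n, Tendsto (fun j => v j n) atTop (𝓝 0)) {δ : ℝ} (hδ : 0 < δ) :
    ∃ I M : ℕ → ℕ, StrictMono I ∧ StrictMono M ∧
      ∀ t, ∑ n ∈ range (M t), |v (I t) n| < δ ∧ ∑' n, |v (I t) (n + M (t + 1))| < δ := by
  have head : ∀ m N, ∃ j > N, ∑ n ∈ range m, |v j n| < δ := fun m N => by
    have hlim : Tendsto (fun j => ∑ n ∈ range m, |v j n|) atTop (𝓝 0) := by
      simpa using tendsto_finsetSum (range m) fun n _ => (hcoord n).abs
    exact ((hlim.eventually (gt_mem_nhds hδ)).and (eventually_gt_atTop N)).exists.imp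
      fun j hj => ⟨hj.2, hj.1⟩
  have tail : ∀ j m, ∃ m' > m, ∑' n, |v j (n + m')| < δ := fun j m =>
    (((tendsto_sum_nat_add fun n => |v j n|).eventually (gt_mem_nhds hδ)).and
      (eventually_gt_atTop m)).exists.imp fun m' hm' => ⟨hm'.2, hm'.1⟩
  choose J hJ_gt hJ using head
  choose M' hM'_gt hM' using tail
  let step : ℕ × ℕ → ℕ × ℕ := fun p => (J (M' p.1 p.2) p.1, M' p.1 p.2)
  let Q : ℕ → ℕ × ℕ := fun t => step^[t] (0, 0)
  have hQ : ∀ t, Q (t + 1) = step (Q t) := fun t => Function.iterate_succ_apply' _ _ _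
  refine ⟨fun t => (Q t).1, fun t => (Q t).2, strictMono_nat_of_lt_succ fun t => ?_,
    strictMono_nat_of_lt_succ fun t => ?_, fun t => ⟨?_, ?_⟩⟩
  · rw [hQ]; exact hJ_gt _ _
  · rw [hQ]; exact hM'_gt _ _
  · cases t with
    | zero => simpa [Q] using hδ
    | succ t => dsimp only; rw [hQ]; exact hJ _ _
  · dsimp only; rw [hQ]; exact hM' _ _

lemma SignType.abs_coe_le_one {α : Type*} [Ring α] [LinearOrder α] [IsOrderedRing α]
    (σ : SignType) : |(σ : α)| ≤ 1 := by
  cases σ <;> simp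

namespace lp

lemma exists_clm_half_le_apply {v : ℕ → ℓ¹(ℕ, ℝ)} {ε : ℝ} (hε : 0 < ε) (hv : ∀ j, ε ≤ ‖v j‖)
    (hcoord : ∀ n, Tendsto (fun j => v j n) atTop (𝓝 0)) :
    ∃ (F : ℓ¹(ℕ, ℝ) →L[ℝ] ℝ) (I : ℕ → ℕ), StrictMono I ∧ ∀ t, ε / 2 ≤ F (v (I t)) := by
  obtain ⟨I, M, hI, hM, hhump⟩ := exists_gliding_hump hcoord (by positivity : 0 < ε / 8)
  -- On the `t`-th block `[M t, M (t + 1))` the signs are those of the `t`-th hump.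
  let s : ℕ → ℝ := fun n => SignType.sign (v (I (Nat.findGreatest (fun k => M k ≤ n) n)) n)
  have hs : ∀ n, |s n| ≤ 1 := fun n => SignType.abs_coe_le_one _
  refine ⟨weightedTsumCLM s hs, I, hI, fun t => ?_⟩
  have hsign : ∀ n ∈ Finset.Ico (M t) (M (t + 1)), s n * v (I t) n = |v (I t) n| := by
    intro n hn
    rw [Finset.mem_Ico] at hn
    simp only [s, hM.findGreatest_apply_le_eq hn.1 hn.2, sign_mul_self]
  have hnorm := norm_eq_tsum_norm (v (I t))
  simp only [Real.norm_eq_abs] at hnorm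
  have hgap := tsum_abs_sub_tsum_mul_le (by simpa using summable_norm (v (I t))) hs
    (hM.monotone t.le_succ) hsign
  rw [weightedTsumCLM_apply]
  linarith [hv (I t), hhump t]

theorem tendsto_zero_of_forall_tendsto_apply_zero {u : ℕ → ℓ¹(ℕ, ℝ)}
    (hu : ∀ f : ℓ¹(ℕ, ℝ) →L[ℝ] ℝ, Tendsto (fun j => f (u j)) atTop (𝓝 0)) :
    Tendsto u atTop (𝓝 0) := by
  rw [Metric.nhds_basis_ball.tendsto_right_iff]
  by_contra! h
  obtain ⟨ε, hε, hfreq⟩ := h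
  obtain ⟨φ, hφ, hφε⟩ := extraction_of_frequently_atTop hfreq
  obtain ⟨F, I, hI, hF⟩ := exists_clm_half_le_apply hε
    (fun j => by simpa using hφε j)
    (fun n => (hu (evalCLM ℝ _ 1 n)).comp hφ.tendsto_atTop)
  have hlim := (hu F).comp (hφ.comp hI).tendsto_atTop
  obtain ⟨t, ht⟩ := (hlim.eventually (gt_mem_nhds (half_pos hε))).exists
  exact (hF t).not_gt ht

theorem cauchySeq_of_forall_cauchySeq_apply {x : ℕ → ℓ¹(ℕ, ℝ)}
    (hx : ∀ f : ℓ¹(ℕ, ℝ) →L[ℝ] ℝ, CauchySeq fun k => f (x k)) : CauchySeq x := by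
  rw [Metric.cauchySeq_iff']
  by_contra! h
  obtain ⟨ε, hε, hfar⟩ := h
  choose n hn_ge hn using hfar
  have hn_lim : Tendsto n atTop atTop := tendsto_atTop_mono hn_ge tendsto_id
  have hnull : Tendsto (fun N => x (n N) - x N) atTop (𝓝 0) := by
    refine tendsto_zero_of_forall_tendsto_apply_zero fun f => ?_
    obtain ⟨L, hL⟩ := cauchySeq_tendsto_of_complete (hx f)
    simpa using (hL.comp hn_lim).sub hL
  obtain ⟨N, hN⟩ := (hnull.eventually (Metric.ball_mem_nhds 0 hε)).exists
  exact (hn N).not_gt (by simpa [dist_eq_norm] using hN)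

end lp

/-- `ℓ¹` is weakly sequentially complete: every weakly Cauchy sequence in `ℓ¹`
converges weakly to some element of `ℓ¹`. -/
theorem stmt_5 (x : ℕ → lp (fun _ : ℕ => ℝ) 1)
    (hw : ∀ f : lp (fun _ : ℕ => ℝ) 1 →L[ℝ] ℝ, CauchySeq (fun k => f (x k))) :
    ∃ y : lp (fun _ : ℕ => ℝ) 1, ∀ f : lp (fun _ : ℕ => ℝ) 1 →L[ℝ] ℝ,
      Tendsto (fun k => f (x k)) atTop (𝓝 (f y)) := by
  obtain ⟨y, hy⟩ := cauchySeq_tendsto_of_complete (lp.cauchySeq_of_forall_cauchySeq_apply hw)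
  exact ⟨y, fun f => (f.continuous.tendsto y).comp hy⟩
end

section
/- Arhangel'skii's theorem: every first countable Lindelöf Hausdorff topological space has cardinality at most 2^{ℵ₀}. -/
/-!
Fix a countable neighbourhood basis `nb x n` at every point. Build, by transfinite recursion
over `ω₁`, sets of size at most `𝔠`: each stage is the closure of the union of the previous ones,
enlarged by one point outside `⋃₀ U` for every countable family `U` of basic neighbourhoods of
earlier points with `⋃₀ U ≠ univ`. First countability bounds the closure of a set of size `𝔠` by
`𝔠 ^ ℵ₀ = 𝔠`, and since `ω₁` has uncountable cofinality the union `A` of all stages is closed under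
these operations, hence closed. If some `x ∉ A`, Hausdorffness gives basic neighbourhoods of the
points of `A` missing `x`; as `A` is closed it is Lindelöf, so countably many of them cover `A`.
The point added for that family lies in `A` but outside the family, a contradiction.
-/

open Cardinal Set Filter Topology
open scoped Ordinal

universe u

theorem mk_biUnion_Iio_le {α : Type u} {κ : Cardinal.{u}} {o : Ordinal.{u}}
    (A : Ordinal.{u} → Set α) (ho : o.card ≤ κ) (hκ : ℵ₀ ≤ κ) (hA : ∀ β < o, #(A β) ≤ κ) :
    #(⋃ β < o, A β) ≤ κ := by
  rw [← Cardinal.lift_le.{u + 1}]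
  calc lift.{u + 1} #(⋃ β ∈ Iio o, A β)
      ≤ lift.{u} #(Iio o) * ⨆ β : Iio o, lift.{u + 1} #(A β) := mk_biUnion_le_lift A (Iio o)
    _ ≤ lift.{u + 1} κ * lift.{u + 1} κ := by
      rw [Cardinal.mk_Iio_ordinal, lift_lift]
      exact mul_le_mul' (lift_le.mpr ho) (ciSup_le' fun β => lift_le.mpr (hA β β.2))
    _ = lift.{u + 1} κ := mul_eq_self (by simpa using hκ)

theorem exists_mk_le_countably_closed {α : Type u} {κ : Cardinal.{u}} (hκ : ℵ₁ ≤ κ)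
    (step : Set α → Set α) (hstep : ∀ B : Set α, #B ≤ κ → #(step B) ≤ κ) :
    ∃ A : Set α, #A ≤ κ ∧ ∀ S ⊆ A, S.Countable → ∃ B, S ⊆ B ∧ step B ⊆ A := by
  let stage : Ordinal.{u} → Set α :=
    Ordinal.lt_wf.fix fun o ih => step (⋃ β, ⋃ h : β < o, ih β h)
  have stage_eq : ∀ o, stage o = step (⋃ β < o, stage β) := Ordinal.lt_wf.fix_eq _
  have hκ₀ : ℵ₀ ≤ κ := aleph0_le_aleph 1 |>.trans hκ
  have card_stage : ∀ o < ω₁, #(stage o) ≤ κ := by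
    intro o
    induction o using WellFoundedLT.induction with
    | _ o ih =>
      intro ho
      rw [stage_eq]
      exact hstep _ <| mk_biUnion_Iio_le stage ((lt_omega_iff_card_lt.mp ho).le.trans hκ) hκ₀
        fun β hβ => ih β hβ (hβ.trans ho)
  refine ⟨⋃ o < ω₁, stage o, mk_biUnion_Iio_le stage (by simp [hκ]) hκ₀ card_stage, ?_⟩
  intro S hSA hS
  have := hS.to_subtype
  choose o ho hSo using fun s : S => mem_iUnion₂.mp (hSA s.2)
  refine ⟨⋃ β < ⨆ s, Order.succ (o s), stage β, fun s hs => ?_, ?_⟩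
  · exact mem_iUnion₂.mpr ⟨o ⟨s, hs⟩,
      (Order.lt_succ _).trans_le (le_ciSup Ordinal.bddAbove_of_small _), hSo _⟩
  · rw [← stage_eq]
    exact subset_biUnion_of_mem (u := stage) <|
      Ordinal.iSup_lt_omega_one fun s => (isSuccLimit_omega 1).succ_lt (ho s)

section FirstCountable

variable {X : Type u} [TopologicalSpace X] [FirstCountableTopology X]

theorem mk_closure_le_pow_aleph0 [T2Space X] (S : Set X) : #(closure S) ≤ #S ^ ℵ₀ := by
  have : ∀ x : closure S, ∃ u : ℕ → S, Tendsto (fun n => (u n : X)) atTop (𝓝 x) := by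
    rintro ⟨x, hx⟩
    obtain ⟨u, huS, hux⟩ := mem_closure_iff_seq_limit.mp hx
    exact ⟨fun n => ⟨u n, huS n⟩, hux⟩
  choose u hu using this
  have hu_inj : Function.Injective u := fun x y hxy =>
    Subtype.ext <| tendsto_nhds_unique (hxy ▸ hu x) (hu y)
  simpa using mk_le_of_injective hu_inj

theorem isClosed_of_closure_countable_subset {A : Set X}
    (h : ∀ S ⊆ A, S.Countable → closure S ⊆ A) : IsClosed A := by
  refine isClosed_of_closure_subset fun x hx => ?_
  obtain ⟨u, huA, hux⟩ := mem_closure_iff_seq_limit.mp hx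
  exact h (range u) (range_subset_iff.mpr huA) (countable_range u)
    (mem_closure_of_tendsto hux (Eventually.of_forall mem_range_self))

end FirstCountable

theorem lindelofSpace_of_sUnion_subcover {X : Type u} [TopologicalSpace X]
    (h : ∀ C : Set (Set X), (∀ u ∈ C, IsOpen u) → ⋃₀ C = Set.univ →
      ∃ D ⊆ C, D.Countable ∧ ⋃₀ D = Set.univ) : LindelofSpace X := by
  refine ⟨isLindelof_of_countable_subcover fun U hU hcover => ?_⟩
  obtain ⟨D, hDU, hD, hDcover⟩ :=
    h (range U) (forall_mem_range.mpr hU) (by rw [sUnion_range]; exact univ_subset_iff.mp hcover)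
  choose i hi using fun d : D => hDU d.2
  have := hD.to_subtype
  refine ⟨range i, countable_range i, fun x _ => ?_⟩
  obtain ⟨d, hd, hxd⟩ := mem_sUnion.mp (hDcover ▸ mem_univ x)
  exact mem_iUnion₂.mpr ⟨i ⟨d, hd⟩, mem_range_self _, (hi ⟨d, hd⟩).symm ▸ hxd⟩

theorem exists_countable_cover_of_nhds_basis {X : Type u} [TopologicalSpace X] [T1Space X]
    [LindelofSpace X] {nb : X → ℕ → Set X} (hnb : ∀ x, (𝓝 x).HasBasis (fun _ => True) (nb x))
    {A : Set X} (hA : IsClosed A) {x : X} (hx : x ∉ A) :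
    ∃ t ⊆ A, t.Countable ∧
      ∃ U ⊆ ⋃ a ∈ t, range (nb a), U.Countable ∧ A ⊆ ⋃₀ U ∧ x ∉ ⋃₀ U := by
  have hsep : ∀ a, ∃ n, a ≠ x → x ∉ nb a n := fun a => by
    rcases eq_or_ne a x with rfl | hax
    · exact ⟨0, fun h => (h rfl).elim⟩
    · obtain ⟨n, -, hn⟩ := (hnb a).mem_iff.mp (compl_singleton_mem_nhds hax)
      exact ⟨n, fun _ hxn => hn hxn rfl⟩
  choose n hn using hsep
  obtain ⟨t, ht, htA, hAt⟩ := hA.isLindelof.elim_nhds_subcover (fun a => nb a (n a))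
    fun a _ => (hnb a).mem_of_mem trivial
  refine ⟨t, htA, ht, (fun a => nb a (n a)) '' t, ?_, ht.image _, by rwa [sUnion_image], ?_⟩
  · rintro _ ⟨a, ha, rfl⟩
    exact mem_biUnion ha (mem_range_self _)
  · simp only [sUnion_image, mem_iUnion₂, not_exists]
    exact fun a ha => hn a (ne_of_mem_of_not_mem (htA a ha) hx)

section ClosingStep

variable {X : Type u} [TopologicalSpace X] [Nonempty X]

noncomputable def closingStep (nb : X → ℕ → Set X) (B : Set X) : Set X :=
  closure (B ∪ (fun U : Set (Set X) => Classical.epsilon fun w => w ∉ ⋃₀ U) ''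
    {U | U ⊆ ⋃ b ∈ B, range (nb b) ∧ U.Countable})

theorem closure_subset_closingStep (nb : X → ℕ → Set X) (B : Set X) :
    closure B ⊆ closingStep nb B :=
  closure_mono subset_union_left

theorem epsilon_mem_closingStep {nb : X → ℕ → Set X} {B : Set X} {U : Set (Set X)}
    (hUB : U ⊆ ⋃ b ∈ B, range (nb b)) (hU : U.Countable) :
    (Classical.epsilon fun w : X => w ∉ ⋃₀ U) ∈ closingStep nb B :=
  subset_closure (Or.inr ⟨U, ⟨hUB, hU⟩, rfl⟩)

theorem mk_closingStep_le [FirstCountableTopology X] [T2Space X] (nb : X → ℕ → Set X)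
    {B : Set X} (hB : #B ≤ 𝔠) : #(closingStep nb B) ≤ 𝔠 := by
  have hN : #(⋃ b ∈ B, range (nb b)) ≤ 𝔠 :=
    calc #(⋃ b ∈ B, range (nb b)) ≤ #B * ⨆ b : B, #(range (nb b)) := mk_biUnion_le _ B
      _ ≤ 𝔠 * 𝔠 := mul_le_mul' hB <| ciSup_le' fun b =>
          (le_aleph0_iff_set_countable.mpr (countable_range _)).trans aleph0_le_continuum
      _ = 𝔠 := mul_eq_self aleph0_le_continuum
  have hW : #{U | U ⊆ ⋃ b ∈ B, range (nb b) ∧ U.Countable} ≤ 𝔠 :=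
    calc #{U | U ⊆ ⋃ b ∈ B, range (nb b) ∧ U.Countable}
        = #{U // U ⊆ ⋃ b ∈ B, range (nb b) ∧ #U ≤ ℵ₀} := by
          simp only [le_aleph0_iff_set_countable]; rfl
      _ ≤ max #(⋃ b ∈ B, range (nb b)) ℵ₀ ^ ℵ₀ := mk_bounded_subset_le _ _
      _ ≤ 𝔠 ^ ℵ₀ := power_le_power_right (max_le hN aleph0_le_continuum)
      _ = 𝔠 := continuum_power_aleph0
  refine (mk_closure_le_pow_aleph0 _).trans <|
    (power_le_power_right ?_).trans_eq continuum_power_aleph0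
  exact (mk_union_le _ _).trans <| add_le_of_le aleph0_le_continuum hB (mk_image_le.trans hW)

end ClosingStep

/-- Arhangel'skii's theorem: a first countable Lindelöf Hausdorff space has
cardinality at most `2^ℵ₀`. -/
theorem stmt_6 (X : Type) [TopologicalSpace X] [FirstCountableTopology X] [T2Space X]
    (hL : ∀ C : Set (Set X), (∀ u ∈ C, IsOpen u) → ⋃₀ C = Set.univ →
      ∃ D ⊆ C, D.Countable ∧ ⋃₀ D = Set.univ) :
    #X ≤ 2 ^ Cardinal.aleph0 := by
  rcases isEmpty_or_nonempty X with _ | _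
  · simp
  have := lindelofSpace_of_sUnion_subcover hL
  choose nb hnb using fun x : X => (𝓝 x).exists_antitone_basis
  obtain ⟨A, hA_card, hA_step⟩ := exists_mk_le_countably_closed aleph_one_le_continuum
    (closingStep nb) fun _ => mk_closingStep_le nb
  have hA_closed : IsClosed A := isClosed_of_closure_countable_subset fun S hSA hS => by
    obtain ⟨B, hSB, hBA⟩ := hA_step S hSA hS
    exact (closure_mono hSB).trans <| (closure_subset_closingStep nb B).trans hBA
  have hA_univ : A = Set.univ := eq_univ_of_forall fun x => by_contra fun hx => by
    obtain ⟨t, htA, ht, U, hUt, hU, hAU, hxU⟩ :=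
      exists_countable_cover_of_nhds_basis (fun y => (hnb y).toHasBasis) hA_closed hx
    obtain ⟨B, htB, hBA⟩ := hA_step t htA ht
    have hUB : U ⊆ ⋃ b ∈ B, range (nb b) := hUt.trans (biUnion_subset_biUnion_left htB)
    exact Classical.epsilon_spec (p := fun w => w ∉ ⋃₀ U) ⟨x, hxU⟩
      (hAU (hBA (epsilon_mem_closingStep hUB hU)))
  rw [two_power_aleph0, ← mk_univ, ← hA_univ]
  exact hA_card
end

section
/- The Sorgenfrey line is hereditarily Lindelöf: every subspace of ℝ with the topology generated by half-open intervals [a, b) is Lindelöf. -/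
/-- The Sorgenfrey topology on `ℝ`: generated by half-open intervals `[a, b)`. -/
def sorgenfreyTopology : TopologicalSpace ℝ :=
  TopologicalSpace.generateFrom {s | ∃ a b : ℝ, a < b ∧ s = Set.Ico a b}

/-- Every Sorgenfrey-open set containing `x` contains some `[x, b)`. -/
lemma sorg_basis {u : Set ℝ} (h : sorgenfreyTopology.IsOpen u) :
    ∀ x ∈ u, ∃ b, x < b ∧ Set.Ico x b ⊆ u := by
  induction h with
  | basic v hv =>
    obtain ⟨a, b, hab, rfl⟩ := hv
    intro x hx
    exact ⟨b, hx.2, fun y hy => ⟨le_trans hx.1 hy.1, hy.2⟩⟩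
  | univ => exact fun x _ => ⟨x + 1, by linarith, fun y _ => trivial⟩
  | inter v w _ _ ihv ihw =>
    intro x hx
    obtain ⟨b1, hb1, h1⟩ := ihv x hx.1
    obtain ⟨b2, hb2, h2⟩ := ihw x hx.2
    exact ⟨min b1 b2, lt_min hb1 hb2,
      fun y hy => ⟨h1 ⟨hy.1, hy.2.trans_le (min_le_left _ _)⟩,
        h2 ⟨hy.1, hy.2.trans_le (min_le_right _ _)⟩⟩⟩
  | sUnion S _ ih =>
    intro x hx
    obtain ⟨v, hvS, hxv⟩ := hx
    obtain ⟨b, hb, hsub⟩ := ih v hvS x hxv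
    exact ⟨b, hb, fun y hy => ⟨v, hvS, hsub hy⟩⟩

/-- The Sorgenfrey line is hereditarily Lindelöf: every subspace is Lindelöf. -/
theorem stmt_10 :
    ∀ s : Set ℝ, ∀ C : Set (Set ℝ),
      (∀ u ∈ C, sorgenfreyTopology.IsOpen u) → s ⊆ ⋃₀ C →
      ∃ D ⊆ C, D.Countable ∧ s ⊆ ⋃₀ D := by
  intro s C hC hsub
  have H : ∀ x ∈ s, ∃ u ∈ C, ∃ b, x < b ∧ Set.Ico x b ⊆ u := by
    intro x hx
    obtain ⟨u, huC, hxu⟩ := hsub hx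
    obtain ⟨b, hb, hsub'⟩ := sorg_basis (hC u huC) x hxu
    exact ⟨u, huC, b, hb, hsub'⟩
  choose! u huC b hb hIco using H
  obtain ⟨T, hTc, hT⟩ := TopologicalSpace.isOpen_iUnion_countable
    (fun y : s => Set.Ioo (y : ℝ) (b y)) (fun y => isOpen_Ioo)
  set A : Set ℝ := {x ∈ s | x ∉ ⋃ y : s, Set.Ioo (y : ℝ) (b y)} with hA
  have hAc : A.Countable := by
    have hq : ∀ x ∈ A, ∃ q : ℚ, x < (q : ℝ) ∧ (q : ℝ) < b x := by
      intro x hx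
      exact exists_rat_btwn (hb x hx.1)
    choose! q hq1 hq2 using hq
    apply Set.countable_of_injective_of_countable_image
      (f := q) ?_ (Set.to_countable _)
    intro x hx y hy hxy
    by_contra hne
    rcases lt_or_gt_of_ne hne with h | h
    · exact hy.2 ⟨_, ⟨⟨x, hx.1⟩, rfl⟩, h, (hq1 y hy).trans_le (hxy ▸ (hq2 x hx).le)⟩
    · exact hx.2 ⟨_, ⟨⟨y, hy.1⟩, rfl⟩, h, (hq1 x hx).trans_le (hxy ▸ (hq2 y hy)).le⟩
  refine ⟨u '' A ∪ (fun y : s => u y) '' T, ?_, ?_, ?_⟩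
  · rintro v (⟨x, hx, rfl⟩ | ⟨y, hy, rfl⟩)
    · exact huC x hx.1
    · exact huC y y.2
  · exact (hAc.image _).union (hTc.image _)
  · intro x hx
    by_cases hxA : x ∈ ⋃ y : s, Set.Ioo (y : ℝ) (b y)
    · rw [← hT] at hxA
      obtain ⟨_, ⟨y, rfl⟩, _, ⟨hyT, rfl⟩, hxy⟩ := hxA
      exact ⟨u y, Or.inr ⟨y, hyT, rfl⟩, hIco y y.2 ⟨hxy.1.le, hxy.2⟩⟩
    · exact ⟨u x, Or.inl ⟨x, ⟨hx, hxA⟩, rfl⟩, hIco x hx ⟨le_refl x, hb x hx⟩⟩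
end

section
/- Every pseudocompact topological group is precompact (totally bounded). -/
/-!
If a topological group `G` is not precompact, some neighbourhood `V` of `1` admits a sequence
`x` with `(x m)⁻¹ * x n ∉ V` for `m < n`. For a symmetric `U` with `U⁴ ⊆ V`, the translates
`x n • U` form a locally finite family, so with a continuous bump `φ` supported in `U`
(topological groups are completely regular), `∑ n, n * φ ((x n)⁻¹ * y)` is a continuous function
taking the value `n` at `x n`, contradicting pseudocompactness.
-/

open scoped Pointwise Topology
open Filter Set Function

lemma CompletelyRegularSpace.exists_continuous_support_subset {X : Type*} [TopologicalSpace X]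
    [CompletelyRegularSpace X] {x : X} {s : Set X} (hs : s ∈ 𝓝 x) :
    ∃ f : X → ℝ, Continuous f ∧ f x = 1 ∧ support f ⊆ s := by
  obtain ⟨f, hf, hfx, hf_one⟩ := CompletelyRegularSpace.completely_regular_isOpen x
    (interior s) isOpen_interior (mem_interior_iff_mem_nhds.2 hs)
  refine ⟨fun y => 1 - f y, continuous_const.sub (continuous_subtype_val.comp hf),
    by simp [hfx], fun y hy => ?_⟩
  by_contra hys
  exact hy (by simp [hf_one fun h => hys (interior_subset h)])

lemma exists_continuous_apply_eq_of_locallyFinite {X : Type*} [TopologicalSpace X]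
    {φ : ℕ → X → ℝ} (hφ : ∀ n, Continuous (φ n)) (hlf : LocallyFinite fun n => support (φ n))
    {x : ℕ → X} (hdiag : ∀ n, φ n (x n) = 1) (hoff : ∀ m n, m ≠ n → φ m (x n) = 0) :
    ∃ f : X → ℝ, Continuous f ∧ ∀ n : ℕ, f (x n) = n := by
  refine ⟨fun y => ∑ᶠ m : ℕ, (m : ℝ) * φ m y,
    continuous_finsum (fun m => continuous_const.mul (hφ m))
      (hlf.subset fun m => support_mul_subset_right _ _), fun n => ?_⟩
  dsimp only
  rw [finsum_eq_single _ n fun m hmn => by simp [hoff m n hmn], hdiag, mul_one]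

instance IsTopologicalGroup.completelyRegularSpace (G : Type*) [Group G] [TopologicalSpace G]
    [IsTopologicalGroup G] : CompletelyRegularSpace G :=
  letI := IsTopologicalGroup.rightUniformSpace G
  inferInstance

section Group

variable {G : Type*} [Group G]

lemma exists_seq_forall_lt_inv_mul_notMem {V : Set G}
    (h : ¬ ∃ F : Finset G, (univ : Set G) ⊆ (F : Set G) * V) :
    ∃ x : ℕ → G, ∀ m n, m < n → (x m)⁻¹ * x n ∉ V := by
  obtain ⟨x, -, hx⟩ := exists_seq_of_forall_finset_exists (fun _ : G => True)
    (fun a b => a⁻¹ * b ∉ V) fun F _ => by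
      obtain ⟨z, -, hz⟩ := not_subset.1 fun hF => h ⟨F, hF⟩
      exact ⟨z, trivial, fun a ha hmem => hz ⟨a, ha, a⁻¹ * z, hmem, mul_inv_cancel_left a z⟩⟩
  exact ⟨x, hx⟩

lemma pairwise_inv_mul_notMem_of_inv_eq {V W : Set G} (hW : W⁻¹ = W) (hWV : W ⊆ V) {x : ℕ → G}
    (hx : ∀ m n, m < n → (x m)⁻¹ * x n ∉ V) : Pairwise fun m n => (x m)⁻¹ * x n ∉ W := by
  intro m n hmn hmem
  rcases hmn.lt_or_gt with h | h
  · exact hx m n h (hWV hmem)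
  · refine hx n m h (hWV ?_)
    rw [← hW, ← Set.inv_mem_inv]
    simpa using hmem

variable [TopologicalSpace G] [IsTopologicalGroup G]

lemma exists_nhds_one_inv_eq_mul_mul_mul_subset {V : Set G} (hV : V ∈ 𝓝 1) :
    ∃ U ∈ 𝓝 (1 : G), U⁻¹ = U ∧ U * U * U * U ⊆ V := by
  obtain ⟨W, hW, -, -, hWV⟩ := exists_closed_nhds_one_inv_eq_mul_subset hV
  obtain ⟨U, hU, -, hUs, hUW⟩ := exists_closed_nhds_one_inv_eq_mul_subset hW
  exact ⟨U, hU, hUs,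
    (mul_assoc (U * U) U U).trans_subset ((mul_subset_mul hUW hUW).trans hWV)⟩

lemma locallyFinite_smul_of_pairwise_inv_mul_notMem {U : Set G} (hU : U ∈ 𝓝 1) (hUs : U⁻¹ = U)
    {x : ℕ → G} (hx : Pairwise fun m n => (x m)⁻¹ * x n ∉ U * U * U * U) :
    LocallyFinite fun n => x n • U := by
  intro y
  refine ⟨y • U, smul_mem_nhds_self.2 hU, Set.Subsingleton.finite fun m hm n hn => ?_⟩
  by_contra hmn
  obtain ⟨z₁, ⟨u₁, hu₁, rfl⟩, v₁, hv₁, hz₁⟩ := hm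
  obtain ⟨z₂, ⟨u₂, hu₂, rfl⟩, v₂, hv₂, hz₂⟩ := hn
  have hinv {u : G} (hu : u ∈ U) : u⁻¹ ∈ U := hUs ▸ Set.inv_mem_inv.2 hu
  have hxm : x m = y * v₁ * u₁⁻¹ := eq_mul_inv_of_mul_eq hz₁.symm
  have hxn : x n = y * v₂ * u₂⁻¹ := eq_mul_inv_of_mul_eq hz₂.symm
  refine hx hmn ?_
  rw [show (x m)⁻¹ * x n = u₁ * v₁⁻¹ * v₂ * u₂⁻¹ by rw [hxm, hxn]; group]
  exact mul_mem_mul (mul_mem_mul (mul_mem_mul hu₁ (hinv hv₁)) hv₂) (hinv hu₂)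

end Group

/-- Comfort–Ross: every pseudocompact topological group is precompact (totally bounded). -/
theorem stmt_13 (G : Type) [Group G] [TopologicalSpace G] [IsTopologicalGroup G]
    (hpc : ∀ f : G → ℝ, Continuous f → ∃ M : ℝ, ∀ x : G, |f x| ≤ M) :
    ∀ V ∈ 𝓝 (1 : G), ∃ F : Finset G, (Set.univ : Set G) ⊆ (F : Set G) * V := by
  intro V hV
  by_contra hcover
  obtain ⟨x, hx⟩ := exists_seq_forall_lt_inv_mul_notMem hcover
  obtain ⟨U, hU, hUs, hUV⟩ := exists_nhds_one_inv_eq_mul_mul_mul_subset hV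
  have hsep := pairwise_inv_mul_notMem_of_inv_eq (by simp [hUs, mul_assoc]) hUV hx
  obtain ⟨φ, hφ, hφ_one, hφU⟩ := CompletelyRegularSpace.exists_continuous_support_subset hU
  have h1U : (1 : G) ∈ U := mem_of_mem_nhds hU
  have hUU : U ⊆ U * U * U * U :=
    ((subset_mul_left U h1U).trans (subset_mul_left _ h1U)).trans (subset_mul_left _ h1U)
  obtain ⟨f, hf, hfx⟩ := exists_continuous_apply_eq_of_locallyFinite
    (φ := fun n y => φ ((x n)⁻¹ * y)) (by fun_prop)
    ((locallyFinite_smul_of_pairwise_inv_mul_notMem hU hUs hsep).subset fun n =>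
      (support_comp_inv_smul (x n) φ).trans_subset (smul_set_mono hφU))
    (by simp [hφ_one])
    (fun m n hmn => notMem_support.1 fun h => hsep hmn (hUU (hφU h)))
  obtain ⟨M, hM⟩ := hpc f hf
  obtain ⟨n, hn⟩ := exists_nat_gt M
  have hbound := hM (x n)
  rw [hfx, abs_of_nonneg n.cast_nonneg] at hbound
  linarith
end

section
/- If a family S of subsets of a Polish space contains all closed sets, is closed under countable unions and countable intersections, and every member of S has the Baire property, then the result of applying the Souslin operation to any Souslin scheme of sets with the Baire property again has the Baire property. -/
/-- `A` has the Baire property: it differs from an open set by a meager set. -/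
def HasBP {X : Type} [TopologicalSpace X] (A : Set X) : Prop :=
  ∃ U : Set X, IsOpen U ∧ IsMeagre (symmDiff A U)

open Set Topology Filter

section Aux

variable {X : Type} [TopologicalSpace X]

private lemma meagre_symmDiff_iff' {A U : Set X} :
    IsMeagre (symmDiff A U) ↔ A =ᵇ U := by
  rw [IsMeagre, Filter.eventuallyEq_set, Filter.eventually_iff]
  have h : (symmDiff A U)ᶜ = {x | x ∈ A ↔ x ∈ U} := by
    ext x
    simp only [Set.mem_compl_iff, Set.mem_symmDiff, Set.mem_setOf_eq]
    tauto
  rw [h]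

private lemma hasBP_iff' {A : Set X} : HasBP A ↔ BaireMeasurableSet A := by
  constructor
  · rintro ⟨U, hU, hm⟩
    exact hU.baireMeasurableSet.congr (meagre_symmDiff_iff'.1 hm).symm
  · intro h
    obtain ⟨U, hU, he⟩ := h.residualEq_isOpen
    exact ⟨U, hU, meagre_symmDiff_iff'.2 he⟩

private lemma isMeagre_iUnion' {ι : Sort*} [Countable ι] {s : ι → Set X}
    (hs : ∀ i, IsMeagre (s i)) : IsMeagre (⋃ i, s i) := by
  rw [IsMeagre, Set.compl_iUnion]
  exact countable_iInter_mem.2 hs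

private lemma isMeagre_union' {s t : Set X} (hs : IsMeagre s) (ht : IsMeagre t) :
    IsMeagre (s ∪ t) := by
  rw [IsMeagre, Set.compl_union]
  exact Filter.inter_mem hs ht

/-- The Baire hull: every set is contained in a Baire-measurable set which is minimal
modulo meager sets. -/
private lemma exists_baire_hull [SecondCountableTopology X] (A : Set X) :
    ∃ H : Set X, A ⊆ H ∧ BaireMeasurableSet H ∧
      ∀ B : Set X, BaireMeasurableSet B → A ⊆ B → IsMeagre (H \ B) := by
  obtain ⟨b, hbc, -, hb⟩ := TopologicalSpace.exists_countable_basis X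
  set T : Set (Set X) := {U | U ∈ b ∧ IsMeagre (U ∩ A)} with hT
  have hTc : T.Countable := hbc.mono fun U hU => hU.1
  have := hTc.to_subtype
  set D : Set X := ⋃₀ T with hD
  have hDopen : IsOpen D := isOpen_sUnion fun U hU => hb.isOpen hU.1
  have hADm : IsMeagre (A ∩ D) := by
    have heq : A ∩ D = ⋃ U : T, (A ∩ (U : Set X)) := by
      ext x
      simp only [Set.mem_inter_iff, hD, Set.mem_sUnion, Set.mem_iUnion]
      constructor
      · rintro ⟨hxA, U, hU, hxU⟩; exact ⟨⟨U, hU⟩, hxA, hxU⟩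
      · rintro ⟨⟨U, hU⟩, hxA, hxU⟩; exact ⟨hxA, U, hU, hxU⟩
    rw [heq]
    refine isMeagre_iUnion' fun U => ?_
    have := U.2.2
    exact this.mono (by rw [Set.inter_comm])
  refine ⟨Dᶜ ∪ (A ∩ D), ?_, ?_, ?_⟩
  · intro x hx
    by_cases h : x ∈ D
    · exact Or.inr ⟨hx, h⟩
    · exact Or.inl h
  · exact (hDopen.baireMeasurableSet.compl).union hADm.baireMeasurableSet
  · intro B hB hAB
    obtain ⟨V, hV, hBV⟩ := hB.residualEq_isOpen
    have hm : IsMeagre (symmDiff B V) := meagre_symmDiff_iff'.2 hBV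
    set W : Set X := interior Vᶜ with hW
    have hWD : W ⊆ D := by
      intro x hx
      obtain ⟨U, hUb, hxU, hUW⟩ := hb.exists_subset_of_mem_open hx isOpen_interior
      refine ⟨U, ⟨hUb, hm.mono ?_⟩, hxU⟩
      rintro y ⟨hyU, hyA⟩
      have hyB : y ∈ B := hAB hyA
      have hyV : y ∉ V := fun hyV => (interior_subset (hUW hyU) : y ∈ Vᶜ) hyV
      exact Or.inl ⟨hyB, hyV⟩
    have hF : IsMeagre (Vᶜ \ W) := by
      have hcl : IsClosed (Vᶜ \ W) := hV.isClosed_compl.sdiff isOpen_interior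
      have hint : interior (Vᶜ \ W) = ∅ := by
        apply Set.eq_empty_of_subset_empty
        intro x hx
        exact (interior_subset hx).2 (interior_mono Set.diff_subset hx)
      rw [IsMeagre]
      exact residual_of_dense_open hcl.isOpen_compl
        (interior_eq_empty_iff_dense_compl.1 hint)
    have hsub : (Dᶜ ∪ (A ∩ D)) \ B ⊆ (Vᶜ \ W) ∪ symmDiff B V := by
      rintro x ⟨hx1, hx2⟩
      rcases hx1 with h | h
      · by_cases hv : x ∈ V
        · exact Or.inr (Or.inr ⟨hv, hx2⟩)
        · exact Or.inl ⟨hv, fun hw => h (hWD hw)⟩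
      · exact absurd (hAB h.1) hx2
    exact (isMeagre_union' hF hm).mono hsub

end Aux
/-- If a family `S` of subsets of a Polish space contains all closed sets, is closed under
countable unions and intersections, and consists of sets with the Baire property, then the
Souslin operation applied to any Souslin scheme of sets with the Baire property yields a
set with the Baire property. -/
theorem stmt_15 (X : Type) [TopologicalSpace X] [PolishSpace X]
    (S : Set (Set X))
    (hclosed : ∀ C : Set X, IsClosed C → C ∈ S)
    (hunion : ∀ f : ℕ → Set X, (∀ n, f n ∈ S) → (⋃ n, f n) ∈ S)
    (hinter : ∀ f : ℕ → Set X, (∀ n, f n ∈ S) → (⋂ n, f n) ∈ S)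
    (hBP : ∀ A ∈ S, HasBP A)
    (A : List ℕ → Set X) (hA : ∀ s : List ℕ, HasBP (A s)) :
    HasBP (⋃ x : ℕ → ℕ, ⋂ n : ℕ, A (List.ofFn fun i : Fin n => x i)) := by

  classical
  rw [hasBP_iff']
  -- localized Souslin results
  set R : List ℕ → Set X := fun s =>
    ⋃ x : ℕ → ℕ, ⋂ n : ℕ, A (s ++ List.ofFn fun i : Fin n => x i) with hR
  have hRnil : R [] = ⋃ x : ℕ → ℕ, ⋂ n : ℕ, A (List.ofFn fun i : Fin n => x i) := by
    simp [hR]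
  rw [← hRnil]
  have hABP : ∀ s, BaireMeasurableSet (A s) := fun s => hasBP_iff'.1 (hA s)
  -- R s ⊆ A s
  have hRA : ∀ s, R s ⊆ A s := by
    intro s x hx
    obtain ⟨y, hy⟩ := Set.mem_iUnion.1 hx
    have h0 := Set.mem_iInter.1 hy 0
    simpa using h0
  -- R s ⊆ ⋃ n, R (s ++ [n])
  have hRstep : ∀ s, R s ⊆ ⋃ n : ℕ, R (s ++ [n]) := by
    intro s x hx
    obtain ⟨y, hy⟩ := Set.mem_iUnion.1 hx
    refine Set.mem_iUnion.2 ⟨y 0, Set.mem_iUnion.2 ⟨fun i => y (i + 1), ?_⟩⟩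
    refine Set.mem_iInter.2 fun m => ?_
    have h := Set.mem_iInter.1 hy (m + 1)
    have heq : s ++ List.ofFn (fun i : Fin (m + 1) => y i) =
        (s ++ [y 0]) ++ List.ofFn (fun i : Fin m => y (i + 1)) := by
      rw [List.ofFn_succ, List.append_assoc]
      rfl
    rwa [heq] at h
  -- Baire hulls
  choose H hH1 hH2 hH3 using fun s => exists_baire_hull (X := X) (R s)
  -- the auxiliary monotone scheme
  set B : List ℕ → Set X := fun s =>
    ⋂ n : ℕ, ⋂ _ : n ≤ s.length, (H (s.take n) ∩ A (s.take n)) with hB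
  have hBmem : ∀ s x, x ∈ B s ↔ ∀ n ≤ s.length, x ∈ H (s.take n) ∩ A (s.take n) := by
    intro s x; simp [hB, Set.mem_iInter]
  have hBBP : ∀ s, BaireMeasurableSet (B s) :=
    fun s => .iInter fun n => .iInter fun _ => (hH2 _).inter (hABP _)
  have hBself : ∀ s, B s ⊆ H s ∩ A s := by
    intro s x hx
    have := (hBmem s x).1 hx s.length le_rfl
    rwa [List.take_length] at this
  have hBext : ∀ s k, B (s ++ [k]) = B s ∩ (H (s ++ [k]) ∩ A (s ++ [k])) := by
    intro s k
    ext x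
    simp only [hBmem, Set.mem_inter_iff]
    constructor
    · intro h
      refine ⟨fun n hn => ?_, ?_⟩
      · have := h n (by simp; omega)
        rwa [List.take_append_of_le_length hn] at this
      · have := h (s ++ [k]).length le_rfl
        rwa [List.take_length] at this
    · rintro ⟨h1, h2⟩ n hn
      simp only [List.length_append, List.length_cons, List.length_nil] at hn
      rcases Nat.lt_or_ge n (s.length + 1) with hlt | hge
      · have hn' : n ≤ s.length := by omega
        rw [List.take_append_of_le_length hn']
        exact h1 n hn'
      · have hn' : n = s.length + 1 := by omega
        have : (s ++ [k]).take n = s ++ [k] := by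
          apply List.take_of_length_le
          simp [hn']
        rw [this]
        exact h2
  -- the error sets
  set C : List ℕ → Set X := fun s => B s \ ⋃ n : ℕ, B (s ++ [n]) with hC
  have hCm : ∀ s, IsMeagre (C s) := by
    intro s
    have hGBP : BaireMeasurableSet (⋃ n : ℕ, (H (s ++ [n]) ∩ A (s ++ [n]))) :=
      .iUnion fun n => (hH2 _).inter (hABP _)
    have hRG : R s ⊆ ⋃ n : ℕ, (H (s ++ [n]) ∩ A (s ++ [n])) := by
      intro x hx
      obtain ⟨n, hn⟩ := Set.mem_iUnion.1 (hRstep s hx)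
      exact Set.mem_iUnion.2 ⟨n, hH1 _ hn, hRA _ hn⟩
    have hkey := hH3 s _ hGBP hRG
    refine hkey.mono ?_
    rintro x ⟨hx1, hx2⟩
    refine ⟨(hBself s hx1).1, fun hx3 => hx2 ?_⟩
    obtain ⟨n, hn⟩ := Set.mem_iUnion.1 hx3
    exact Set.mem_iUnion.2 ⟨n, by rw [hBext s n]; exact ⟨hx1, hn⟩⟩
  set E : Set X := ⋃ s : List ℕ, C s with hE
  have hEm : IsMeagre E := isMeagre_iUnion' hCm
  -- B [] \ E ⊆ R []
  have hmain : B [] \ E ⊆ R [] := by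
    rintro x ⟨hxB, hxE⟩
    have key : ∀ s, x ∈ B s → ∃ n, x ∈ B (s ++ [n]) := by
      intro s hs
      by_contra hcon
      push_neg at hcon
      apply hxE
      refine Set.mem_iUnion.2 ⟨s, hs, fun hmem => ?_⟩
      obtain ⟨n, hn⟩ := Set.mem_iUnion.1 hmem
      exact hcon n hn
    set nxt : List ℕ → ℕ := fun s => if h : x ∈ B s then (key s h).choose else 0 with hnxt
    set g : ℕ → List ℕ := fun n => Nat.rec [] (fun _ s => s ++ [nxt s]) n with hg
    have hg0 : g 0 = [] := rfl
    have hgs : ∀ n, g (n + 1) = g n ++ [nxt (g n)] := fun n => rfl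
    have hxg : ∀ n, x ∈ B (g n) := by
      intro n
      induction n with
      | zero => exact hxB
      | succ n ih =>
        rw [hgs, hnxt]
        simp only [dif_pos ih]
        exact (key (g n) ih).choose_spec
    have hglen : ∀ n, (g n).length = n := by
      intro n
      induction n with
      | zero => rfl
      | succ n ih => rw [hgs]; simp [ih]
    set y : ℕ → ℕ := fun n => nxt (g n) with hy
    have hofn : ∀ n, List.ofFn (fun i : Fin n => y i) = g n := by
      intro n
      induction n with
      | zero => rfl
      | succ n ih =>
        rw [List.ofFn_succ']
        simp only [Fin.coe_castSucc, Fin.val_last]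
        rw [List.concat_eq_append, ih, ← hgs]
    refine Set.mem_iUnion.2 ⟨y, Set.mem_iInter.2 fun n => ?_⟩
    have := (hBself (g n) (hxg n)).2
    rw [← hofn n] at this
    simpa using this
  -- conclude
  have hRnilB : R [] ⊆ B [] := by
    intro x hx
    rw [hBmem]
    intro n hn
    simp only [List.length_nil, Nat.le_zero] at hn
    subst hn
    exact ⟨hH1 [] hx, hRA [] hx⟩
  have hsd : symmDiff (B []) (R []) ⊆ E := by
    rintro x (⟨h1, h2⟩ | ⟨h1, h2⟩)
    · by_contra hxE
      exact h2 (hmain ⟨h1, hxE⟩)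
    · exact absurd (hRnilB h1) h2
  exact (hBBP []).congr (meagre_symmDiff_iff'.1 (hEm.mono hsd))
end

section
/- If κ is a regular uncountable cardinal and X is a topological space of cardinality at least κ such that X is κ-compact (every open cover has a subcover of size < κ), then every subset of X of cardinality κ has a complete accumulation point: a point x such that every open neighborhood of x meets the subset in a set of cardinality κ. -/
open scoped Cardinal

/-- If `κ` is regular uncountable, `X` has cardinality at least `κ` and is `κ`-compact
(every open cover has a subcover of size `< κ`), then every subset of `X` of cardinality
`κ` has a complete accumulation point. -/
theorem stmt_17 (κ : Cardinal) (hreg : κ.IsRegular) (hunc : Cardinal.aleph0 < κ)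
    (X : Type) [TopologicalSpace X] (hcard : κ ≤ #X)
    (hcomp : ∀ C : Set (Set X), (∀ u ∈ C, IsOpen u) → ⋃₀ C = Set.univ →
      ∃ D ⊆ C, #D < κ ∧ ⋃₀ D = Set.univ)
    (A : Set X) (hA : #A = κ) :
    ∃ x : X, ∀ U : Set X, IsOpen U → x ∈ U → #(U ∩ A : Set X) = κ := by
  by_contra h
  push_neg at h
  set C : Set (Set X) := {U | IsOpen U ∧ #(U ∩ A : Set X) < κ} with hC
  have hcover : ⋃₀ C = Set.univ := by
    ext x
    simp only [Set.mem_sUnion, Set.mem_univ, iff_true]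
    obtain ⟨U, hUo, hxU, hUne⟩ := h x
    refine ⟨U, ⟨hUo, lt_of_le_of_ne ?_ hUne⟩, hxU⟩
    calc #(U ∩ A : Set X) ≤ #A := Cardinal.mk_le_mk_of_subset Set.inter_subset_right
    _ = κ := hA
  obtain ⟨D, hDC, hDcard, hDcov⟩ := hcomp C (fun u hu => hu.1) hcover
  have hsub : A ⊆ ⋃ (U : D), ((U : Set X) ∩ A) := by
    intro a ha
    have : a ∈ ⋃₀ D := hDcov ▸ Set.mem_univ a
    obtain ⟨U, hU, haU⟩ := this
    exact Set.mem_iUnion.2 ⟨⟨U, hU⟩, haU, ha⟩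
  have hlt : #A < κ := by
    calc #A ≤ #(⋃ (U : D), ((U : Set X) ∩ A) : Set X) := Cardinal.mk_le_mk_of_subset hsub
    _ ≤ Cardinal.sum (fun U : D => #((U : Set X) ∩ A : Set X)) := Cardinal.mk_iUnion_le_sum_mk
    _ < κ := Cardinal.sum_lt_of_isRegular hreg hDcard (fun U => (hDC U.2).2)
  exact absurd hA hlt.ne
end
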